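/- arXiv:2211.04322 — 2 statements merged into one kernel-verified Lean document; each statement's English description precedes it below -/
import Mathlib

section
/- Let 𝒮 be an injective split system on a finite set X with |X| ≥ 4 whose non-trivial splits all have size 2. (i) If P(𝒮) does not contain a 3-clique, then dim(𝒮) = max_{x ∈ X} deg_{P(𝒮)}(x). (ii) If P(𝒮) contains a 3-clique, then dim(𝒮) = max( max_{x ∈ X} deg_{P(𝒮)}(x), 3 ). -/
namespace InjectiveSplitSystems

open Finset

variable {α : Type*} [DecidableEq α]

/-- A split of `X`: an unordered bipartition of `X` into two nonempty disjoint parts,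
represented as the two-element set `{A, B}` of its parts. -/
def IsSplit (X : Finset α) (S : Finset (Finset α)) : Prop :=
  ∃ A B : Finset α, S = {A, B} ∧ A ∪ B = X ∧ A ∩ B = ∅ ∧ A ≠ ∅ ∧ B ≠ ∅

/-- `S` is an `r`-split of `X`: a split of `X` whose minimum part size is `r`. -/
def IsRSplit (X : Finset α) (r : ℕ) (S : Finset (Finset α)) : Prop :=
  IsSplit X S ∧ (∃ A ∈ S, A.card = r) ∧ ∀ A ∈ S, r ≤ A.card

/-- A split system on `X`: a set of splits of `X` containing all trivial splits
`{x} | X \ {x}`, `x ∈ X`. -/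
def IsSplitSystem (X : Finset α) (𝒮 : Finset (Finset (Finset α))) : Prop :=
  (∀ S ∈ 𝒮, IsSplit X S) ∧ ∀ x ∈ X, ({{x}, X \ {x}} : Finset (Finset α)) ∈ 𝒮

/-- `phiNe Y Y' S` says `φ_Y(S) ≠ φ_{Y'}(S)`: the part of `S` containing at least two
elements of the 3-set `Y` differs from the part of `S` containing at least two
elements of the 3-set `Y'`. -/
def phiNe (Y Y' : Finset α) (S : Finset (Finset α)) : Prop :=
  ∃ t ∈ S, ∃ t' ∈ S, t ≠ t' ∧ 2 ≤ (Y ∩ t).card ∧ 2 ≤ (Y' ∩ t').card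

/-- A split system on `X` is injective if for all distinct 3-subsets `Y`, `Y'` of `X`
there is a split `S ∈ 𝒮` with `φ_Y(S) ≠ φ_{Y'}(S)`. -/
def IsInjective (X : Finset α) (𝒮 : Finset (Finset (Finset α))) : Prop :=
  ∀ Y Y' : Finset α, Y ⊆ X → Y' ⊆ X → Y.card = 3 → Y'.card = 3 → Y ≠ Y' →
    ∃ S ∈ 𝒮, phiNe Y Y' S

/-- The restriction `S|_Y` of a split to `Y`, as the set of restricted parts. -/
def restrictSplit (S : Finset (Finset α)) (Y : Finset α) : Finset (Finset α) :=
  S.image (· ∩ Y)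

open scoped Classical in
/-- The restriction `𝒮|_Y` of a split system to `Y`: all splits
`(A ∩ Y) | (B ∩ Y)` with `A|B ∈ 𝒮` and both intersections nonempty. -/
noncomputable def restrictSS (𝒮 : Finset (Finset (Finset α))) (Y : Finset α) :
    Finset (Finset (Finset α)) :=
  (𝒮.image fun S => restrictSplit S Y).filter fun T => ∀ t ∈ T, t ≠ ∅

/-- `𝒮` 4-dices `X`. -/
def FourDices (X : Finset α) (𝒮 : Finset (Finset (Finset α))) : Prop :=
  X.card < 4 ∨ ∀ Y ⊆ X, Y.card = 4 →
    ∃ 𝒯 ⊆ restrictSS 𝒮 Y, 2 ≤ 𝒯.card ∧ ∀ S ∈ 𝒯, IsRSplit Y 2 S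

/-- `𝒮` 5-dices `X`. -/
def FiveDices (X : Finset α) (𝒮 : Finset (Finset (Finset α))) : Prop :=
  X.card < 5 ∨ ∀ Y ⊆ X, Y.card = 5 →
    ∃ 𝒯 ⊆ restrictSS 𝒮 Y, 5 ≤ 𝒯.card ∧ ∀ S ∈ 𝒯, IsRSplit Y 2 S

/-- `𝒮` 6-dices `X`: every 6-subset restriction contains a 3-split or a triangle
of 2-splits. -/
def SixDices (X : Finset α) (𝒮 : Finset (Finset (Finset α))) : Prop :=
  X.card < 6 ∨ ∀ Y ⊆ X, Y.card = 6 →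
    (∃ S ∈ restrictSS 𝒮 Y, IsRSplit Y 3 S) ∨
    (∃ x ∈ Y, ∃ y ∈ Y, ∃ z ∈ Y, x ≠ y ∧ x ≠ z ∧ y ≠ z ∧
      ({{x, y}, Y \ {x, y}} : Finset (Finset α)) ∈ restrictSS 𝒮 Y ∧
      ({{x, z}, Y \ {x, z}} : Finset (Finset α)) ∈ restrictSS 𝒮 Y ∧
      ({{y, z}, Y \ {y, z}} : Finset (Finset α)) ∈ restrictSS 𝒮 Y)

/-- Two splits are incompatible if they are distinct and all four pairwise
intersections of their parts are nonempty. -/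
def Incompatible (S T : Finset (Finset α)) : Prop :=
  S ≠ T ∧ ∀ A ∈ S, ∀ B ∈ T, A ∩ B ≠ ∅

open scoped Classical in
/-- The dimension of a split system: maximum size of a pairwise incompatible subset
(which is `1` when all splits are pairwise compatible and `𝒮` is nonempty). -/
noncomputable def dimSS (𝒮 : Finset (Finset (Finset α))) : ℕ :=
  (𝒮.powerset.filter fun 𝒯 => ∀ S ∈ 𝒯, ∀ T ∈ 𝒯, S ≠ T → Incompatible S T).sup Finset.card

/-- The injective dimension `ID(n)`: minimum dimension of an injective split system
on `{1, …, n}`. -/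
noncomputable def ID (n : ℕ) : ℕ :=
  sInf {d : ℕ | ∃ 𝒮 : Finset (Finset (Finset ℕ)),
    IsSplitSystem (Finset.Icc 1 n) 𝒮 ∧ IsInjective (Finset.Icc 1 n) 𝒮 ∧ dimSS 𝒮 = d}

/-- The injective 2-split dimension `ID₂(n)`: minimum dimension of an injective split
system on `{1, …, n}` all of whose non-trivial splits have size 2. -/
noncomputable def ID2 (n : ℕ) : ℕ :=
  sInf {d : ℕ | ∃ 𝒮 : Finset (Finset (Finset ℕ)),
    IsSplitSystem (Finset.Icc 1 n) 𝒮 ∧ IsInjective (Finset.Icc 1 n) 𝒮 ∧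
    (∀ S ∈ 𝒮, IsRSplit (Finset.Icc 1 n) 1 S ∨ IsRSplit (Finset.Icc 1 n) 2 S) ∧
    dimSS 𝒮 = d}

/-- `𝒮` is rooted-injective relative to `r`. -/
def IsRootedInjective (X : Finset α) (r : α) (𝒮 : Finset (Finset (Finset α))) : Prop :=
  ∀ Z Z' : Finset α, Z ⊆ X \ {r} → Z' ⊆ X \ {r} → Z.card = 2 → Z'.card = 2 → Z ≠ Z' →
    ∃ S ∈ 𝒮, phiNe (insert r Z) (insert r Z') S

/-- The rooted-injective dimension `ID^r(n)`: minimum dimension of a split system on an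
`n`-element set that is rooted-injective relative to a given element. -/
noncomputable def IDr (n : ℕ) : ℕ :=
  sInf {d : ℕ | ∃ 𝒮 : Finset (Finset (Finset ℕ)),
    IsSplitSystem (Finset.Icc 1 n) 𝒮 ∧ IsRootedInjective (Finset.Icc 1 n) 1 𝒮 ∧
    dimSS 𝒮 = d}

/-- `𝒮` is circular: there is a labelling `x_1, …, x_n` of `X` such that every split
of `𝒮` has the form `{x_i, …, x_j} | complement`. -/
def IsCircular (X : Finset α) (𝒮 : Finset (Finset (Finset α))) : Prop :=
  ∃ f : ℕ → α, Set.InjOn f ↑(Finset.Icc 1 X.card) ∧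
    (Finset.Icc 1 X.card).image f = X ∧
    ∀ S ∈ 𝒮, ∃ i j : ℕ, 1 ≤ i ∧ i ≤ j ∧ j ≤ X.card ∧
      S = {(Finset.Icc i j).image f, X \ (Finset.Icc i j).image f}

/-- `𝒮` is maximal circular: circular and not properly contained in any circular
split system on `X`. -/
def IsMaximalCircular (X : Finset α) (𝒮 : Finset (Finset (Finset α))) : Prop :=
  IsCircular X 𝒮 ∧ ∀ 𝒮' : Finset (Finset (Finset α)),
    IsSplitSystem X 𝒮' → IsCircular X 𝒮' → 𝒮 ⊆ 𝒮' → 𝒮' = 𝒮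

/-- The degree of `x` in the graph `P(𝒮)` on vertex set `X` whose edges are the
pairs `{x, y}` with `xy | X − {x,y} ∈ 𝒮`. -/
def degP (X : Finset α) (𝒮 : Finset (Finset (Finset α))) (x : α) : ℕ :=
  ((X \ {x}).filter fun y => ({{x, y}, X \ {x, y}} : Finset (Finset α)) ∈ 𝒮).card

/-- `P(𝒮)` contains a 3-clique. -/
def HasTriangle (X : Finset α) (𝒮 : Finset (Finset (Finset α))) : Prop :=
  ∃ x ∈ X, ∃ y ∈ X, ∃ z ∈ X, x ≠ y ∧ x ≠ z ∧ y ≠ z ∧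
    ({{x, y}, X \ {x, y}} : Finset (Finset α)) ∈ 𝒮 ∧
    ({{x, z}, X \ {x, z}} : Finset (Finset α)) ∈ 𝒮 ∧
    ({{y, z}, X \ {y, z}} : Finset (Finset α)) ∈ 𝒮

/-- Conditions (B1) and (B2) for a map to be a vertex of the Buneman graph. -/
def IsBunemanVertex (𝒮 : Finset (Finset (Finset α))) (φ : {S // S ∈ 𝒮} → Finset α) : Prop :=
  (∀ S, φ S ∈ S.1) ∧ ∀ S S', S ≠ S' → (φ S ∩ φ S').Nonempty

/-- The vertex set of the Buneman graph `B(𝒮)`. -/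
abbrev BunemanVertex (𝒮 : Finset (Finset (Finset α))) : Type _ :=
  {φ : {S // S ∈ 𝒮} → Finset α // IsBunemanVertex 𝒮 φ}

/-- The Buneman graph `B(𝒮)`: two vertices are adjacent iff they differ on exactly
one split. -/
def BunemanGraph (𝒮 : Finset (Finset (Finset α))) : SimpleGraph (BunemanVertex 𝒮) where
  Adj φ ψ := ∃! S, φ.1 S ≠ ψ.1 S
  symm := by
    constructor
    rintro φ ψ ⟨S, hS, hU⟩
    exact ⟨S, hS.symm, fun T hT => hU T hT.symm⟩
  loopless := by
    constructor
    rintro φ ⟨S, hS, -⟩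
    exact hS rfl

/-- `m` is a median of `u`, `v`, `w` in the graph `G`. -/
def IsMedian {V : Type*} (G : SimpleGraph V) (u v w m : V) : Prop :=
  G.dist u m + G.dist m v = G.dist u v ∧
  G.dist v m + G.dist m w = G.dist v w ∧
  G.dist u m + G.dist m w = G.dist u w

/-!
A trivial split is compatible with every split, so an incompatible family with at least two
members consists of 2-splits `P | X - P`. For `|X| ≥ 4` two such splits are incompatible exactly
when their 2-sets are distinct and intersect, so `dim(𝒮)` is the size of a largest intersecting
family of edges of `P(𝒮)`. An intersecting family of edges of a graph is a star, bounded by the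
maximum degree, or a triangle. Injectivity forces `P(𝒮)` to have an edge, so the maximum degree
also bounds families of size one.
-/

section

variable {X : Finset α} {𝒮 : Finset (Finset (Finset α))}

theorem dimSS_le_iff {n : ℕ} :
    dimSS 𝒮 ≤ n ↔
      ∀ 𝒯 ⊆ 𝒮, (𝒯 : Set (Finset (Finset α))).Pairwise Incompatible → 𝒯.card ≤ n := by
  simp only [dimSS, Finset.sup_le_iff, mem_filter, mem_powerset, and_imp]
  rfl

theorem le_dimSS {𝒯 : Finset (Finset (Finset α))} (h𝒯 : 𝒯 ⊆ 𝒮)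
    (hp : (𝒯 : Set (Finset (Finset α))).Pairwise Incompatible) : 𝒯.card ≤ dimSS 𝒮 :=
  dimSS_le_iff.1 le_rfl 𝒯 h𝒯 hp

theorem IsSplit.eq_pair_sdiff {S : Finset (Finset α)} {A : Finset α} (h : IsSplit X S)
    (hA : A ∈ S) : A ⊆ X ∧ S = {A, X \ A} := by
  obtain ⟨B, C, rfl, rfl, hBC, -, -⟩ := h
  have hdisj : Disjoint B C := disjoint_iff_inter_eq_empty.2 hBC
  rcases mem_insert.1 hA with rfl | hA
  · exact ⟨subset_union_left, by rw [union_sdiff_cancel_left hdisj]⟩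
  · rw [mem_singleton] at hA
    subst hA
    exact ⟨subset_union_right, by rw [union_sdiff_cancel_right hdisj, pair_comm]⟩

theorem IsRSplit.exists_eq_pair_sdiff {r : ℕ} {S : Finset (Finset α)} (h : IsRSplit X r S) :
    ∃ A ⊆ X, A.card = r ∧ S = {A, X \ A} := by
  obtain ⟨hS, ⟨A, hA, hAr⟩, -⟩ := h
  exact ⟨A, (hS.eq_pair_sdiff hA).1, hAr, (hS.eq_pair_sdiff hA).2⟩

theorem not_incompatible_of_isRSplit_one {S T : Finset (Finset α)} (hS : IsRSplit X 1 S)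
    (hT : IsSplit X T) : ¬ Incompatible S T := by
  obtain ⟨A, -, hA1, rfl⟩ := hS.exists_eq_pair_sdiff
  obtain ⟨x, rfl⟩ := card_eq_one.1 hA1
  obtain ⟨C, hC⟩ : T.Nonempty := by
    obtain ⟨C, D, rfl, -⟩ := hT
    exact ⟨C, mem_insert_self _ _⟩
  obtain ⟨-, rfl⟩ := hT.eq_pair_sdiff hC
  rintro ⟨-, hinc⟩
  by_cases hxC : x ∈ C
  · exact hinc {x} (mem_insert_self _ _) (X \ C) (by simp)
      (singleton_inter_of_notMem fun h => (mem_sdiff.1 h).2 hxC)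
  · exact hinc {x} (mem_insert_self _ _) C (mem_insert_self _ _)
      (singleton_inter_of_notMem hxC)

theorem incompatible_pair_sdiff {P Q : Finset α} (hP : P ⊆ X) (hQ : Q ⊆ X)
    (hcard : P.card = Q.card) (hX : P.card + Q.card ≤ X.card) (hPQ : P ≠ Q)
    (hint : (P ∩ Q).Nonempty) : Incompatible {P, X \ P} {Q, X \ Q} := by
  have hPQ' : (P \ Q).Nonempty :=
    sdiff_nonempty.2 fun h => hPQ (eq_of_subset_of_card_le h hcard.ge)
  have hQP' : (Q \ P).Nonempty :=
    sdiff_nonempty.2 fun h => hPQ (eq_of_subset_of_card_le h hcard.le).symm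
  have hout : (X \ (P ∪ Q)).Nonempty := by
    apply sdiff_nonempty_of_card_lt_card
    have := card_union_add_card_inter P Q
    have := hint.card_pos
    omega
  refine ⟨fun h => ?_, ?_⟩
  · have hP : P ∈ ({Q, X \ Q} : Finset (Finset α)) := h ▸ mem_insert_self _ _
    rcases mem_insert.1 hP with h | h
    · exact hPQ h
    · obtain ⟨z, hz⟩ := hint
      simp_all
  · simp only [mem_insert, mem_singleton, forall_eq_or_imp, forall_eq, ← nonempty_iff_ne_empty]
    refine ⟨⟨hint, hPQ'.mono ?_⟩, hQP'.mono ?_, hout.mono ?_⟩ <;> grind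

/-- The edge set of `P(𝒮)`. -/
def edgesP (X : Finset α) (𝒮 : Finset (Finset (Finset α))) : Finset (Finset α) :=
  (X.powersetCard 2).filter fun Q => {Q, X \ Q} ∈ 𝒮

theorem mem_edgesP {Q : Finset α} :
    Q ∈ edgesP X 𝒮 ↔ Q ⊆ X ∧ Q.card = 2 ∧ {Q, X \ Q} ∈ 𝒮 := by
  rw [edgesP, mem_filter, mem_powersetCard, and_assoc]

theorem pair_mem_edgesP {a b : α} :
    {a, b} ∈ edgesP X 𝒮 ↔ a ∈ X ∧ b ∈ X ∧ a ≠ b ∧ {{a, b}, X \ {a, b}} ∈ 𝒮 := by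
  rw [mem_edgesP, insert_subset_iff, singleton_subset_iff, card_pair_eq_two_iff, and_assoc]

theorem exists_eq_pair_of_mem {Q : Finset α} {x : α} (hQ : Q.card = 2) (hx : x ∈ Q) :
    ∃ y, y ≠ x ∧ Q = {x, y} := by
  obtain ⟨y, hy⟩ := card_eq_one.1 (by rw [card_erase_of_mem hx, hQ] : (Q.erase x).card = 1)
  have hy' : y ∈ Q.erase x := hy ▸ mem_singleton_self y
  exact ⟨y, ne_of_mem_erase hy', by rw [← insert_erase hx, hy]⟩

theorem degP_eq_card_filter_edgesP {x : α} (hx : x ∈ X) :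
    degP X 𝒮 x = ((edgesP X 𝒮).filter (x ∈ ·)).card := by
  refine card_bij (fun y _ => {x, y}) ?_ ?_ ?_
  · intro y hy
    simp only [mem_filter, mem_sdiff, mem_singleton] at hy
    exact mem_filter.2
      ⟨pair_mem_edgesP.2 ⟨hx, hy.1.1, Ne.symm hy.1.2, hy.2⟩, mem_insert_self _ _⟩
  · intro y hy y' hy' h
    simp only [mem_filter, mem_sdiff, mem_singleton] at hy hy'
    have : y ∈ ({x, y'} : Finset α) := h ▸ mem_insert_of_mem (mem_singleton_self y)
    simpa [hy.1.2] using this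
  · intro Q hQ
    obtain ⟨hQE, hxQ⟩ := mem_filter.1 hQ
    obtain ⟨hQX, hQ2, hQ𝒮⟩ := mem_edgesP.1 hQE
    obtain ⟨y, hyx, rfl⟩ := exists_eq_pair_of_mem hQ2 hxQ
    exact ⟨y, mem_filter.2 ⟨mem_sdiff.2 ⟨hQX (by simp), by simpa using hyx⟩, hQ𝒮⟩, rfl⟩

theorem hasTriangle_iff : HasTriangle X 𝒮 ↔
    ∃ a b c, {a, b} ∈ edgesP X 𝒮 ∧ {a, c} ∈ edgesP X 𝒮 ∧ {b, c} ∈ edgesP X 𝒮 := by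
  simp only [HasTriangle, pair_mem_edgesP]
  grind

theorem star_or_triangle_of_intersecting {ℰ : Finset (Finset α)}
    (hsized : (ℰ : Set (Finset α)).Sized 2) (hℰ : (ℰ : Set (Finset α)).Intersecting)
    (hne : ℰ.Nonempty) :
    (∃ x, ∀ e ∈ ℰ, x ∈ e) ∨ ∃ a b c, {a, b} ∈ ℰ ∧ {a, c} ∈ ℰ ∧ {b, c} ∈ ℰ ∧
      ℰ ⊆ ({a, b, c} : Finset α).powersetCard 2 := by
  have meets : ∀ {e f}, e ∈ ℰ → f ∈ ℰ → ∃ z ∈ e, z ∈ f := fun he hf =>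
    by simpa only [not_disjoint_iff, exists_prop] using hℰ he hf
  refine or_iff_not_imp_left.2 fun hstar => ?_
  push Not at hstar
  obtain ⟨e, he⟩ := hne
  obtain ⟨a, b, -, rfl⟩ := card_eq_two.1 (hsized he)
  obtain ⟨f, hf, haf⟩ := hstar a
  obtain ⟨g, hg, hbg⟩ := hstar b
  have hbf : b ∈ f := by grind [meets he hf]
  obtain ⟨c, -, rfl⟩ := exists_eq_pair_of_mem (hsized hf) hbf
  have hg' : g = {a, c} := by
    obtain ⟨u, v, huv, rfl⟩ := card_eq_two.1 (hsized hg)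
    grind [meets he hg, meets hf hg]
  subst hg'
  refine ⟨a, b, c, he, hg, pair_comm b c ▸ hf, fun h hh => ?_⟩
  -- `h` meets each side of the triangle, and no vertex lies on all three sides.
  obtain ⟨u, v, huv, rfl⟩ := card_eq_two.1 (hsized hh)
  rw [mem_powersetCard, card_pair huv, insert_subset_iff, singleton_subset_iff]
  grind [meets hh he, meets hh hf, meets hh hg]

theorem card_le_dimSS_of_intersecting (hX : 4 ≤ X.card) {ℰ : Finset (Finset α)}
    (hℰ : ℰ ⊆ edgesP X 𝒮) (hint : (ℰ : Set (Finset α)).Intersecting) :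
    ℰ.card ≤ dimSS 𝒮 := by
  have hinc :
      (ℰ : Set (Finset α)).Pairwise fun P Q => Incompatible {P, X \ P} {Q, X \ Q} := by
    intro P hP Q hQ hPQ
    obtain ⟨hPX, hP2, -⟩ := mem_edgesP.1 (hℰ hP)
    obtain ⟨hQX, hQ2, -⟩ := mem_edgesP.1 (hℰ hQ)
    exact incompatible_pair_sdiff hPX hQX (hP2.trans hQ2.symm) (by omega) hPQ
      (not_disjoint_iff_nonempty_inter.1 (hint hP hQ))
  have hinj : Set.InjOn (fun P => ({P, X \ P} : Finset (Finset α))) ℰ :=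
    fun P hP Q hQ h => by_contra fun hPQ => (hinc hP hQ hPQ).1 h
  rw [← card_image_of_injOn hinj]
  refine le_dimSS (fun S hS => ?_) (by rwa [coe_image, hinj.pairwise_image])
  obtain ⟨P, hP, rfl⟩ := mem_image.1 hS
  exact (mem_edgesP.1 (hℰ hP)).2.2

theorem degP_le_dimSS (hX : 4 ≤ X.card) {x : α} (hx : x ∈ X) : degP X 𝒮 x ≤ dimSS 𝒮 := by
  rw [degP_eq_card_filter_edgesP hx]
  refine card_le_dimSS_of_intersecting hX (filter_subset _ _) fun P hP Q hQ => ?_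
  exact not_disjoint_iff.2 ⟨x, (mem_filter.1 hP).2, (mem_filter.1 hQ).2⟩

theorem three_le_dimSS (hX : 4 ≤ X.card) (ht : HasTriangle X 𝒮) : 3 ≤ dimSS 𝒮 := by
  obtain ⟨a, b, c, hab, hac, hbc⟩ := hasTriangle_iff.1 ht
  have hab' := (pair_mem_edgesP.1 hab).2.2.1
  have hac' := (pair_mem_edgesP.1 hac).2.2.1
  have hbc' := (pair_mem_edgesP.1 hbc).2.2.1
  have h3 : ({{a, b}, {a, c}, {b, c}} : Finset (Finset α)).card = 3 := by
    rw [card_eq_three]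
    refine ⟨_, _, _, ne_of_mem_of_not_mem' (mem_insert_of_mem (mem_singleton_self b)) ?_,
      ne_of_mem_of_not_mem' (mem_insert_self a _) ?_,
      ne_of_mem_of_not_mem' (mem_insert_self a _) ?_, rfl⟩ <;>
    simp [*, Ne.symm hab']
  calc 3 = ({{a, b}, {a, c}, {b, c}} : Finset (Finset α)).card := h3.symm
    _ ≤ dimSS 𝒮 := by
      refine card_le_dimSS_of_intersecting hX (by simp [insert_subset_iff, *]) ?_
      simp [Set.intersecting_insert, disjoint_insert_left]

theorem exists_intersecting_edgesP_of_pairwise_incompatible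
    (h2 : ∀ S ∈ 𝒮, IsRSplit X 1 S ∨ IsRSplit X 2 S) {𝒯 : Finset (Finset (Finset α))}
    (h𝒯 : 𝒯 ⊆ 𝒮) (hp : (𝒯 : Set (Finset (Finset α))).Pairwise Incompatible)
    (hcard : 1 < 𝒯.card) :
    ∃ ℰ ⊆ edgesP X 𝒮, (ℰ : Set (Finset α)).Intersecting ∧ ℰ.card = 𝒯.card := by
  have h2𝒯 : ∀ S ∈ 𝒯, IsRSplit X 2 S := fun S hS =>
    (h2 S (h𝒯 hS)).resolve_left fun h1 => by
      obtain ⟨T, hT, hTS⟩ := exists_mem_ne hcard S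
      exact not_incompatible_of_isRSplit_one h1 ((h2 T (h𝒯 hT)).elim (·.1) (·.1))
        (hp hS hT hTS.symm)
  choose! P hPX hP2 hSP using fun S hS => (h2𝒯 S hS).exists_eq_pair_sdiff
  have hPS : ∀ S ∈ 𝒯, P S ∈ S := fun S hS => by
    have := mem_insert_self (P S) {X \ P S}
    rwa [← hSP S hS] at this
  have hinj : Set.InjOn P 𝒯 := fun S hS T hT h => by rw [hSP S hS, hSP T hT, h]
  refine ⟨𝒯.image P, fun Q hQ => ?_, fun Q hQ R hR => ?_, card_image_of_injOn hinj⟩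
  · obtain ⟨S, hS, rfl⟩ := mem_image.1 hQ
    exact mem_edgesP.2 ⟨hPX S hS, hP2 S hS, hSP S hS ▸ h𝒯 hS⟩
  · obtain ⟨S, hS, rfl⟩ := mem_image.1 hQ
    obtain ⟨T, hT, rfl⟩ := mem_image.1 hR
    rw [not_disjoint_iff_nonempty_inter, nonempty_iff_ne_empty]
    rcases eq_or_ne S T with rfl | hST
    · rw [inter_self, ← nonempty_iff_ne_empty, ← card_pos, hP2 S hS]
      exact two_pos
    · exact (hp hS hT hST).2 _ (hPS S hS) _ (hPS T hT)

theorem card_le_degP_or_hasTriangle {ℰ : Finset (Finset α)} (hℰ : ℰ ⊆ edgesP X 𝒮)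
    (hint : (ℰ : Set (Finset α)).Intersecting) (hne : ℰ.Nonempty) :
    (∃ x ∈ X, ℰ.card ≤ degP X 𝒮 x) ∨ (ℰ.card ≤ 3 ∧ HasTriangle X 𝒮) := by
  have hsized : (ℰ : Set (Finset α)).Sized 2 := fun Q hQ => (mem_edgesP.1 (hℰ hQ)).2.1
  rcases star_or_triangle_of_intersecting hsized hint hne with
    ⟨x, hx⟩ | ⟨a, b, c, hab, hac, hbc, hsub⟩
  · obtain ⟨Q, hQ⟩ := hne
    have hxX : x ∈ X := (mem_edgesP.1 (hℰ hQ)).1 (hx Q hQ)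
    refine Or.inl ⟨x, hxX, ?_⟩
    rw [degP_eq_card_filter_edgesP hxX]
    exact card_le_card fun Q hQ => mem_filter.2 ⟨hℰ hQ, hx Q hQ⟩
  · refine Or.inr ⟨?_, hasTriangle_iff.2 ⟨a, b, c, hℰ hab, hℰ hac, hℰ hbc⟩⟩
    calc ℰ.card ≤ (({a, b, c} : Finset α).powersetCard 2).card := card_le_card hsub
      _ ≤ Nat.choose 3 2 := by
        rw [card_powersetCard]
        exact Nat.choose_le_choose 2 card_le_three

theorem IsInjective.edgesP_nonempty (hX : 4 ≤ X.card) (hinj : IsInjective X 𝒮)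
    (h2 : ∀ S ∈ 𝒮, IsRSplit X 1 S ∨ IsRSplit X 2 S) : (edgesP X 𝒮).Nonempty := by
  obtain ⟨Y, hY, Y', hY', hYY'⟩ := one_lt_card.1 <| show 1 < (X.powersetCard 3).card by
    rw [card_powersetCard]
    exact lt_of_lt_of_le (by decide) (Nat.choose_le_choose 3 hX)
  rw [mem_powersetCard] at hY hY'
  obtain ⟨S, hS, t, ht, t', ht', htt', hYt, hY't'⟩ := hinj Y Y' hY.1 hY'.1 hY.2 hY'.2 hYY'
  have htc : 2 ≤ t.card := hYt.trans (card_le_card inter_subset_right)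
  have ht'c : 2 ≤ t'.card := hY't'.trans (card_le_card inter_subset_right)
  rcases h2 S hS with h1 | h2S
  · obtain ⟨A, -, hA1, rfl⟩ := h1.exists_eq_pair_sdiff
    simp only [mem_insert, mem_singleton] at ht ht'
    rcases ht with rfl | rfl <;> rcases ht' with rfl | rfl <;>
      first | omega | exact absurd rfl htt'
  · obtain ⟨P, hPX, hP2, rfl⟩ := h2S.exists_eq_pair_sdiff
    exact ⟨P, mem_edgesP.2 ⟨hPX, hP2, hS⟩⟩

theorem one_le_sup_degP (hX : 4 ≤ X.card) (hinj : IsInjective X 𝒮)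
    (h2 : ∀ S ∈ 𝒮, IsRSplit X 1 S ∨ IsRSplit X 2 S) : 1 ≤ X.sup (degP X 𝒮) := by
  obtain ⟨Q, hQ⟩ := hinj.edgesP_nonempty hX h2
  obtain ⟨hQX, hQ2, -⟩ := mem_edgesP.1 hQ
  obtain ⟨x, hx⟩ := card_pos.1 (hQ2 ▸ two_pos : 0 < Q.card)
  refine le_trans ?_ (le_sup (hQX hx))
  rw [degP_eq_card_filter_edgesP (hQX hx)]
  exact card_pos.2 ⟨Q, mem_filter.2 ⟨hQ, hx⟩⟩

theorem dimSS_le_of_degP_le (h2 : ∀ S ∈ 𝒮, IsRSplit X 1 S ∨ IsRSplit X 2 S) {n : ℕ}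
    (hn : 1 ≤ n) (hdeg : ∀ x ∈ X, degP X 𝒮 x ≤ n) (htri : HasTriangle X 𝒮 → 3 ≤ n) :
    dimSS 𝒮 ≤ n := by
  refine dimSS_le_iff.2 fun 𝒯 h𝒯 hp => ?_
  rcases le_or_gt 𝒯.card 1 with h1 | h1
  · exact h1.trans hn
  obtain ⟨ℰ, hℰ, hint, hcard⟩ :=
    exists_intersecting_edgesP_of_pairwise_incompatible h2 h𝒯 hp h1
  rw [← hcard]
  rcases card_le_degP_or_hasTriangle hℰ hint (card_pos.1 (by omega)) with ⟨x, hx, h⟩ | ⟨h, ht⟩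
  · exact h.trans (hdeg x hx)
  · exact h.trans (htri ht)

end

theorem statement17_general (X : Finset α) (hX : 4 ≤ X.card)
    (𝒮 : Finset (Finset (Finset α)))
    (hinj : IsInjective X 𝒮)
    (h2 : ∀ S ∈ 𝒮, IsRSplit X 1 S ∨ IsRSplit X 2 S) :
    (¬ HasTriangle X 𝒮 → dimSS 𝒮 = X.sup (degP X 𝒮)) ∧
    (HasTriangle X 𝒮 → dimSS 𝒮 = max (X.sup (degP X 𝒮)) 3) := by
  have hlow : X.sup (degP X 𝒮) ≤ dimSS 𝒮 := Finset.sup_le fun x hx => degP_le_dimSS hX hx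
  have hone : 1 ≤ X.sup (degP X 𝒮) := one_le_sup_degP hX hinj h2
  refine ⟨fun hnt => le_antisymm ?_ hlow,
    fun ht => le_antisymm ?_ (max_le hlow (three_le_dimSS hX ht))⟩
  · exact dimSS_le_of_degP_le h2 hone (fun x hx => le_sup hx) fun ht => absurd ht hnt
  · exact dimSS_le_of_degP_le h2 (hone.trans (le_max_left _ _))
      (fun x hx => (le_sup hx).trans (le_max_left _ _)) fun _ => le_max_right _ _

/-- Let `𝒮` be an injective split system on `X` (`|X| ≥ 4`) whose
non-trivial splits all have size 2. (i) If `P(𝒮)` has no 3-clique, then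
`dim(𝒮) = max_{x ∈ X} deg_{P(𝒮)}(x)`. (ii) If `P(𝒮)` has a 3-clique, then
`dim(𝒮) = max(max_{x ∈ X} deg_{P(𝒮)}(x), 3)`. -/
theorem statement17 (X : Finset α) (hX : 4 ≤ X.card)
    (𝒮 : Finset (Finset (Finset α))) (h𝒮 : IsSplitSystem X 𝒮)
    (hinj : IsInjective X 𝒮)
    (h2 : ∀ S ∈ 𝒮, IsRSplit X 1 S ∨ IsRSplit X 2 S) :
    (¬ HasTriangle X 𝒮 → dimSS 𝒮 = X.sup (degP X 𝒮)) ∧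
    (HasTriangle X 𝒮 → dimSS 𝒮 = max (X.sup (degP X 𝒮)) 3) :=
  statement17_general X hX 𝒮 hinj h2

end InjectiveSplitSystems
end

section
/- Let X be a finite set with n = |X| ≥ 4 and let r ∈ X. Then there exists a split system 𝒮 on X that is rooted-injective relative to r with dim(𝒮) = 2, and moreover ID^r(n) = 2. -/
namespace InjectiveSplitSystems

open Finset

variable {α : Type*} [DecidableEq α]

/-! For distinct `a, b, c ≠ r`, a split separating `{r, a, b}` from `{r, a, c}` has a part avoiding
`r` that meets `{a, b, c}` in two points; a split separating the two pairs containing the third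
point has such a part meeting `{a, b, c}` in a different pair, and the two splits cross (witnesses:
the common point, the two private points, and `r`). So every rooted-injective system has
dimension at least 2. Conversely, order `X - {r}` as `x₁, …, x_{n-1}` and take the trivial splits
and all initial and final segments `{x₁, …, x_i}`, `{x_i, …, x_{n-1}}`: two pairs with different
largest (or smallest) elements are separated by an initial (or final) segment. Initial segments are
nested, as are final segments, and trivial splits cross nothing, so no three of these splits are
pairwise incompatible. -/

lemma Incompatible.symm {S T : Finset (Finset α)} (h : Incompatible S T) : Incompatible T S :=
  ⟨h.1.symm, fun A hA B hB => by rw [inter_comm]; exact h.2 B hB A hA⟩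

lemma phiNe.symm {Y Y' : Finset α} {S : Finset (Finset α)} (h : phiNe Y Y' S) : phiNe Y' Y S := by
  obtain ⟨t, ht, t', ht', hne, h, h'⟩ := h
  exact ⟨t', ht', t, ht, hne.symm, h', h⟩

section Dimension

variable {𝒮 : Finset (Finset (Finset α))}

lemma card_le_dimSS {𝒯 : Finset (Finset (Finset α))} (h𝒯 : 𝒯 ⊆ 𝒮)
    (hpair : (𝒯 : Set (Finset (Finset α))).Pairwise Incompatible) : 𝒯.card ≤ dimSS 𝒮 := by
  classical
  exact le_sup (f := Finset.card) (mem_filter.2 ⟨mem_powerset.2 h𝒯, fun _ hS _ hT => hpair hS hT⟩)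

lemma dimSS_le {k : ℕ} (h : ∀ 𝒯 ⊆ 𝒮, (𝒯 : Set (Finset (Finset α))).Pairwise Incompatible →
    𝒯.card ≤ k) : dimSS 𝒮 ≤ k := by
  classical
  refine Finset.sup_le fun 𝒯 h𝒯 => ?_
  obtain ⟨hsub, hpair⟩ := mem_filter.1 h𝒯
  exact h 𝒯 (mem_powerset.1 hsub) fun _ hS _ hT => hpair _ hS _ hT

lemma two_le_dimSS_of_incompatible {S T : Finset (Finset α)} (hS : S ∈ 𝒮) (hT : T ∈ 𝒮)
    (h : Incompatible S T) : 2 ≤ dimSS 𝒮 := by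
  have hpair : (({S, T} : Finset (Finset (Finset α))) : Set (Finset (Finset α))).Pairwise
      Incompatible := by
    rw [coe_pair, Set.pairwise_pair]
    exact fun _ => ⟨h, h.symm⟩
  calc 2 = ({S, T} : Finset (Finset (Finset α))).card := (card_pair h.1).symm
    _ ≤ dimSS 𝒮 := card_le_dimSS (insert_subset hS (singleton_subset_iff.2 hT)) hpair

lemma card_inter_le_one_of_compatible {𝒯 𝒞 : Finset (Finset (Finset α))}
    (hpair : (𝒯 : Set (Finset (Finset α))).Pairwise Incompatible)
    (h𝒞 : ∀ S ∈ 𝒞, ∀ T ∈ 𝒞, ¬Incompatible S T) : (𝒯 ∩ 𝒞).card ≤ 1 := by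
  refine card_le_one.2 fun S hS T hT => ?_
  rw [mem_inter] at hS hT
  by_contra hne
  exact h𝒞 S hS.2 T hT.2 (hpair hS.1 hT.1 hne)

end Dimension

section Splits

variable {X B B' : Finset α}

def splitOf (X B : Finset α) : Finset (Finset α) := {B, X \ B}

@[simp]
lemma mem_splitOf {A : Finset α} : A ∈ splitOf X B ↔ A = B ∨ A = X \ B := by
  simp [splitOf]

lemma isSplit_splitOf (hBX : B ⊆ X) (hB : B.Nonempty) (hXB : (X \ B).Nonempty) :
    IsSplit X (splitOf X B) :=
  ⟨B, X \ B, rfl, union_sdiff_of_subset hBX, inter_sdiff_self _ _, hB.ne_empty, hXB.ne_empty⟩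

lemma IsSplit.eq_splitOf {S : Finset (Finset α)} (hS : IsSplit X S) {A : Finset α} (hA : A ∈ S) :
    S = splitOf X A := by
  obtain ⟨A₀, B₀, rfl, hX, hAB, -, -⟩ := hS
  have hdisj : Disjoint A₀ B₀ := disjoint_iff_inter_eq_empty.2 hAB
  rcases mem_insert.1 hA with rfl | hA
  · rw [splitOf, ← hX, union_sdiff_cancel_left hdisj]
  · rw [mem_singleton.1 hA, splitOf, ← hX, union_sdiff_cancel_right hdisj, pair_comm]

lemma incompatible_splitOf {x y z w : α} (hxB : x ∈ B) (hxB' : x ∈ B') (hyB : y ∈ B)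
    (hyB' : y ∉ B') (hzB : z ∉ B) (hzB' : z ∈ B') (hwB : w ∉ B) (hwB' : w ∉ B')
    (hy : y ∈ X) (hz : z ∈ X) (hw : w ∈ X) :
    Incompatible (splitOf X B) (splitOf X B') := by
  refine ⟨fun h => ?_, fun A hA A' hA' => ?_⟩
  · have hB : B ∈ splitOf X B' := h ▸ mem_splitOf.2 (Or.inl rfl)
    rcases mem_splitOf.1 hB with rfl | rfl
    · exact hyB' hyB
    · exact (mem_sdiff.1 hxB).2 hxB'
  rw [mem_splitOf] at hA hA'
  rw [← nonempty_iff_ne_empty]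
  rcases hA with rfl | rfl <;> rcases hA' with rfl | rfl
  exacts [⟨x, mem_inter.2 ⟨hxB, hxB'⟩⟩, ⟨y, mem_inter.2 ⟨hyB, mem_sdiff.2 ⟨hy, hyB'⟩⟩⟩,
    ⟨z, mem_inter.2 ⟨mem_sdiff.2 ⟨hz, hzB⟩, hzB'⟩⟩,
    ⟨w, mem_inter.2 ⟨mem_sdiff.2 ⟨hw, hwB⟩, mem_sdiff.2 ⟨hw, hwB'⟩⟩⟩]

lemma not_incompatible_splitOf_of_subset (h : B ⊆ B') :
    ¬Incompatible (splitOf X B) (splitOf X B') := fun hinc =>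
  hinc.2 B (mem_splitOf.2 (Or.inl rfl)) (X \ B') (mem_splitOf.2 (Or.inr rfl))
    (disjoint_iff_inter_eq_empty.1 (disjoint_sdiff.mono_left h))

lemma not_incompatible_splitOf_singleton {x : α} :
    ¬Incompatible (splitOf X {x}) (splitOf X B) := by
  intro hinc
  by_cases hx : x ∈ B
  · exact not_incompatible_splitOf_of_subset (singleton_subset_iff.2 hx) hinc
  · exact hinc.2 {x} (mem_splitOf.2 (Or.inl rfl)) B (mem_splitOf.2 (Or.inl rfl))
      (singleton_inter_of_notMem hx)

lemma phiNe_splitOf {Z Z' : Finset α} {r : α} (hr : r ∈ X) (hrB : r ∉ B) (hZB : Z ⊆ B)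
    (hZ : 2 ≤ Z.card) (hZ' : Z' ⊆ X \ {r}) (hZ'B : ¬Z' ⊆ B) :
    phiNe (insert r Z) (insert r Z') (splitOf X B) := by
  obtain ⟨w, hwZ', hwB⟩ := not_subset.1 hZ'B
  obtain ⟨hwX, hwr⟩ := mem_sdiff.1 (hZ' hwZ')
  obtain ⟨z, hz⟩ : Z.Nonempty := card_pos.1 (by omega)
  refine ⟨B, mem_splitOf.2 (Or.inl rfl), X \ B, mem_splitOf.2 (Or.inr rfl),
    fun h => (mem_sdiff.1 (h ▸ hZB hz)).2 (hZB hz), ?_, ?_⟩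
  · exact hZ.trans (card_le_card fun u hu => mem_inter.2 ⟨mem_insert_of_mem hu, hZB hu⟩)
  · have hrw : r ≠ w := fun h => hwr (mem_singleton.2 h.symm)
    calc 2 = ({r, w} : Finset α).card := (card_pair hrw).symm
      _ ≤ _ := card_le_card (insert_subset
          (mem_inter.2 ⟨mem_insert_self r Z', mem_sdiff.2 ⟨hr, hrB⟩⟩)
          (singleton_subset_iff.2 (mem_inter.2 ⟨mem_insert_of_mem hwZ', mem_sdiff.2 ⟨hwX, hwB⟩⟩)))

end Splits

section LowerBound

variable {X Z Z' : Finset α} {r : α} {𝒮 : Finset (Finset (Finset α))}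

lemma subset_of_two_le_card_insert_inter {t : Finset α} (hZ : Z.card ≤ 2) (hrt : r ∉ t)
    (h : 2 ≤ (insert r Z ∩ t).card) : Z ⊆ t := by
  rw [insert_inter_of_notMem hrt] at h
  exact inter_eq_left.1 (eq_of_subset_of_card_le inter_subset_left (by omega))

lemma not_subset_of_two_le_card_insert_inter {t s : Finset α} (h : 2 ≤ (insert r Z ∩ t).card)
    (hts : Disjoint t s) : ¬Z ⊆ s := by
  obtain ⟨w, hw⟩ : (Z ∩ t).Nonempty := by
    rw [← card_pos]
    have hsub : insert r Z ∩ t ⊆ insert r (Z ∩ t) := fun x hx => by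
      simp only [mem_inter, mem_insert] at hx ⊢; tauto
    have := card_le_card hsub
    have := card_insert_le r (Z ∩ t)
    omega
  exact fun hsub => disjoint_left.1 hts (mem_inter.1 hw).2 (hsub (mem_inter.1 hw).1)

lemma exists_part_of_phiNe {S : Finset (Finset α)} (hS : IsSplit X S)
    (hZ : Z.card ≤ 2) (hZ' : Z'.card ≤ 2) (h : phiNe (insert r Z) (insert r Z') S) :
    ∃ B ∈ S, r ∉ B ∧ (Z ⊆ B ∧ ¬Z' ⊆ B ∨ Z' ⊆ B ∧ ¬Z ⊆ B) := by
  obtain ⟨t, ht, t', ht', hne, hZt, hZt'⟩ := h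
  obtain rfl := hS.eq_splitOf ht
  obtain rfl : t' = X \ t := (mem_splitOf.1 ht').resolve_left hne.symm
  by_cases hrt : r ∈ t
  · have hrt' : r ∉ X \ t := fun h => (mem_sdiff.1 h).2 hrt
    exact ⟨X \ t, ht', hrt', Or.inr ⟨subset_of_two_le_card_insert_inter hZ' hrt' hZt',
      not_subset_of_two_le_card_insert_inter hZt disjoint_sdiff⟩⟩
  · exact ⟨t, ht, hrt, Or.inl ⟨subset_of_two_le_card_insert_inter hZ hrt hZt,
      not_subset_of_two_le_card_insert_inter hZt' sdiff_disjoint⟩⟩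

lemma exists_incompatible_of_mem_part (hr : r ∈ X) (hsys : ∀ S ∈ 𝒮, IsSplit X S)
    (hinj : IsRootedInjective X r 𝒮) {a b c : α} (ha : a ∈ X \ {r}) (hb : b ∈ X \ {r})
    (hc : c ∈ X \ {r}) (hab : a ≠ b) {S : Finset (Finset α)} {B : Finset α} (hS : S ∈ 𝒮)
    (hB : B ∈ S) (hrB : r ∉ B) (haB : a ∈ B) (hbB : b ∈ B) (hcB : c ∉ B) :
    ∃ S ∈ 𝒮, ∃ T ∈ 𝒮, Incompatible S T := by
  have hac : a ≠ c := by rintro rfl; exact hcB haB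
  have hbc : b ≠ c := by rintro rfl; exact hcB hbB
  have hne : ({a, c} : Finset α) ≠ {b, c} := fun h => by
    have : a ∈ ({b, c} : Finset α) := h ▸ mem_insert_self a {c}
    simp only [mem_insert, mem_singleton] at this
    tauto
  obtain ⟨T, hT, hφ⟩ := hinj {a, c} {b, c} (insert_subset ha (singleton_subset_iff.2 hc))
    (insert_subset hb (singleton_subset_iff.2 hc)) (card_pair hac) (card_pair hbc) hne
  obtain ⟨B', hB', hrB', hsep⟩ :=
    exists_part_of_phiNe (hsys T hT) (card_pair hac).le (card_pair hbc).le hφ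
  refine ⟨S, hS, T, hT, ?_⟩
  rw [(hsys S hS).eq_splitOf hB, (hsys T hT).eq_splitOf hB']
  simp only [insert_subset_iff, singleton_subset_iff, not_and] at hsep
  rcases hsep with ⟨⟨haB', hcB'⟩, hbB'⟩ | ⟨⟨hbB', hcB'⟩, haB'⟩
  · exact incompatible_splitOf haB haB' hbB (hbB' · hcB') hcB hcB' hrB hrB'
      (mem_sdiff.1 hb).1 (mem_sdiff.1 hc).1 hr
  · exact incompatible_splitOf hbB hbB' haB (haB' · hcB') hcB hcB' hrB hrB'
      (mem_sdiff.1 ha).1 (mem_sdiff.1 hc).1 hr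

lemma two_le_dimSS_of_isRootedInjective (hX : 4 ≤ X.card) (hr : r ∈ X)
    (hsys : ∀ S ∈ 𝒮, IsSplit X S) (hinj : IsRootedInjective X r 𝒮) : 2 ≤ dimSS 𝒮 := by
  have h3 : 2 < (X \ {r}).card := by
    rw [card_sdiff_of_subset (singleton_subset_iff.2 hr), card_singleton]; omega
  obtain ⟨a, b, c, ha, hb, hc, hab, hac, hbc⟩ := two_lt_card_iff.1 h3
  have hne : ({a, b} : Finset α) ≠ {a, c} := fun h => by
    have : b ∈ ({a, c} : Finset α) := h ▸ mem_insert_of_mem (mem_singleton_self b)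
    simp only [mem_insert, mem_singleton] at this
    tauto
  obtain ⟨S, hS, hφ⟩ := hinj {a, b} {a, c} (insert_subset ha (singleton_subset_iff.2 hb))
    (insert_subset ha (singleton_subset_iff.2 hc)) (card_pair hab) (card_pair hac) hne
  obtain ⟨B, hB, hrB, hsep⟩ :=
    exists_part_of_phiNe (hsys S hS) (card_pair hab).le (card_pair hac).le hφ
  simp only [insert_subset_iff, singleton_subset_iff, not_and] at hsep
  obtain ⟨S, hS, T, hT, hST⟩ : ∃ S ∈ 𝒮, ∃ T ∈ 𝒮, Incompatible S T := by
    rcases hsep with ⟨⟨haB, hbB⟩, hcB⟩ | ⟨⟨haB, hcB⟩, hbB⟩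
    · exact exists_incompatible_of_mem_part hr hsys hinj ha hb hc hab hS hB hrB haB hbB (hcB haB)
    · exact exists_incompatible_of_mem_part hr hsys hinj ha hc hb hac hS hB hrB haB hcB (hbB haB)
  exact two_le_dimSS_of_incompatible hS hT hST

end LowerBound

section Construction

variable {β : Type*} [LinearOrder β] {ι : α → β} {X M : Finset α} {r : α}

omit [DecidableEq α] in
def prefixSet (M : Finset α) (ι : α → β) (y : α) : Finset α := M.filter fun z => ι z ≤ ι y

def prefixSplits (X M : Finset α) (ι : α → β) : Finset (Finset (Finset α)) :=
  M.image fun y => splitOf X (prefixSet M ι y)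

/-- Final segments of `X - {r}` enter as initial segments for the reversed order `toDual ∘ ι`. -/
def chainSplits (X : Finset α) (r : α) (ι : α → β) : Finset (Finset (Finset α)) :=
  X.image (fun x => splitOf X {x}) ∪ prefixSplits X (X \ {r}) ι ∪
    prefixSplits X (X \ {r}) (OrderDual.toDual ∘ ι)

omit [DecidableEq α] in
lemma mem_prefixSet {y z : α} : z ∈ prefixSet M ι y ↔ z ∈ M ∧ ι z ≤ ι y := mem_filter

omit [DecidableEq α] in
lemma prefixSet_mono {y y' : α} (h : ι y ≤ ι y') : prefixSet M ι y ⊆ prefixSet M ι y' :=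
  fun _ hz => mem_prefixSet.2 ⟨(mem_prefixSet.1 hz).1, (mem_prefixSet.1 hz).2.trans h⟩

lemma not_incompatible_of_mem_prefixSplits {S T : Finset (Finset α)} (hS : S ∈ prefixSplits X M ι)
    (hT : T ∈ prefixSplits X M ι) : ¬Incompatible S T := by
  obtain ⟨y, -, rfl⟩ := mem_image.1 hS
  obtain ⟨y', -, rfl⟩ := mem_image.1 hT
  rcases le_total (ι y) (ι y') with h | h
  · exact not_incompatible_splitOf_of_subset (prefixSet_mono h)
  · exact fun hinc => not_incompatible_splitOf_of_subset (prefixSet_mono h) hinc.symm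

lemma isSplit_of_mem_prefixSplits (hr : r ∈ X) {S : Finset (Finset α)}
    (hS : S ∈ prefixSplits X (X \ {r}) ι) : IsSplit X S := by
  obtain ⟨y, hy, rfl⟩ := mem_image.1 hS
  have hrP : r ∉ prefixSet (X \ {r}) ι y := fun h =>
    (mem_sdiff.1 (mem_prefixSet.1 h).1).2 (mem_singleton_self r)
  exact isSplit_splitOf (fun z hz => (mem_sdiff.1 (mem_prefixSet.1 hz).1).1)
    ⟨y, mem_prefixSet.2 ⟨hy, le_rfl⟩⟩ ⟨r, mem_sdiff.2 ⟨hr, hrP⟩⟩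

lemma isSplitSystem_chainSplits (hX : 1 < X.card) (hr : r ∈ X) :
    IsSplitSystem X (chainSplits X r ι) := by
  refine ⟨fun S hS => ?_, fun x hx => mem_union_left _ (mem_union_left _ (mem_image_of_mem _ hx))⟩
  rcases mem_union.1 hS with hS | hS
  · rcases mem_union.1 hS with hS | hS
    · obtain ⟨x, hx, rfl⟩ := mem_image.1 hS
      obtain ⟨y, hy, hyx⟩ := exists_mem_ne hX x
      exact isSplit_splitOf (singleton_subset_iff.2 hx) (singleton_nonempty x)
        ⟨y, mem_sdiff.2 ⟨hy, fun h => hyx (mem_singleton.1 h)⟩⟩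
    · exact isSplit_of_mem_prefixSplits hr hS
  · exact isSplit_of_mem_prefixSplits hr hS

lemma exists_eq_splitOf_of_mem_chainSplits {S : Finset (Finset α)} (hS : S ∈ chainSplits X r ι) :
    ∃ B, S = splitOf X B := by
  simp only [chainSplits, prefixSplits, mem_union, mem_image] at hS
  rcases hS with (⟨x, -, rfl⟩ | ⟨y, -, rfl⟩) | ⟨y, -, rfl⟩ <;> exact ⟨_, rfl⟩

lemma dimSS_chainSplits_le : dimSS (chainSplits X r ι) ≤ 2 := by
  refine dimSS_le fun 𝒯 h𝒯 hpair => ?_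
  by_contra! h2
  set 𝒜 := prefixSplits X (X \ {r}) ι
  set ℬ := prefixSplits X (X \ {r}) (OrderDual.toDual ∘ ι)
  have hsub : 𝒯 ⊆ 𝒯 ∩ 𝒜 ∪ 𝒯 ∩ ℬ := by
    intro S hS
    obtain ⟨T, hT, hTS⟩ := exists_mem_ne (by omega : 1 < 𝒯.card) S
    rcases mem_union.1 (h𝒯 hS) with h | h
    · rcases mem_union.1 h with h | h
      · obtain ⟨x, -, rfl⟩ := mem_image.1 h
        obtain ⟨B, rfl⟩ := exists_eq_splitOf_of_mem_chainSplits (h𝒯 hT)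
        exact absurd (hpair hS hT hTS.symm) not_incompatible_splitOf_singleton
      · exact mem_union_left _ (mem_inter.2 ⟨hS, h⟩)
    · exact mem_union_right _ (mem_inter.2 ⟨hS, h⟩)
  have := (card_le_card hsub).trans (card_union_le _ _)
  have := card_inter_le_one_of_compatible (𝒞 := 𝒜) hpair fun _ hS _ hT =>
    not_incompatible_of_mem_prefixSplits hS hT
  have := card_inter_le_one_of_compatible (𝒞 := ℬ) hpair fun _ hS _ hT =>
    not_incompatible_of_mem_prefixSplits hS hT
  omega

lemma exists_eq_pair_lt {Z : Finset α} (hι : Set.InjOn ι Z) (hZ : Z.card = 2) :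
    ∃ a b, ι a < ι b ∧ Z = {a, b} := by
  obtain ⟨a, b, hab, rfl⟩ := card_eq_two.1 hZ
  have hne : ι a ≠ ι b := fun h => hab (hι (by simp) (by simp) h)
  rcases hne.lt_or_gt with h | h
  · exact ⟨a, b, h, rfl⟩
  · exact ⟨b, a, h, pair_comm a b⟩

lemma phiNe_prefixSplit (hr : r ∈ X) {Z Z' : Finset α} {y y' : α} (hZ : Z ⊆ X \ {r})
    (hZc : Z.card = 2) (hZy : ∀ z ∈ Z, ι z ≤ ι y) (hZ' : Z' ⊆ X \ {r}) (hy' : y' ∈ Z')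
    (hlt : ι y < ι y') :
    phiNe (insert r Z) (insert r Z') (splitOf X (prefixSet (X \ {r}) ι y)) :=
  phiNe_splitOf hr (fun h => (mem_sdiff.1 (mem_prefixSet.1 h).1).2 (mem_singleton_self r))
    (fun z hz => mem_prefixSet.2 ⟨hZ hz, hZy z hz⟩) hZc.ge hZ'
    (fun h => (mem_prefixSet.1 (h hy')).2.not_gt hlt)

lemma isRootedInjective_chainSplits (hr : r ∈ X) (hι : Set.InjOn ι (X \ {r} : Finset α)) :
    IsRootedInjective X r (chainSplits X r ι) := by
  intro Z Z' hZ hZ' hZc hZ'c hne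
  obtain ⟨a, b, hab, rfl⟩ := exists_eq_pair_lt (hι.mono (coe_subset.2 hZ)) hZc
  obtain ⟨c, d, hcd, rfl⟩ := exists_eq_pair_lt (hι.mono (coe_subset.2 hZ')) hZ'c
  have top : ∀ {x y : α}, ι x < ι y → ∀ z ∈ ({x, y} : Finset α), ι z ≤ ι y := by
    intro x y h z hz
    rcases mem_insert.1 hz with rfl | hz
    · exact h.le
    · rw [mem_singleton.1 hz]
  have bot : ∀ {x y : α}, ι x < ι y →
      ∀ z ∈ ({x, y} : Finset α), OrderDual.toDual (ι z) ≤ OrderDual.toDual (ι x) := by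
    intro x y h z hz
    rcases mem_insert.1 hz with rfl | hz
    · exact le_rfl
    · rw [mem_singleton.1 hz]; exact h.le
  have mem_pre : ∀ y ∈ X \ {r}, splitOf X (prefixSet (X \ {r}) ι y) ∈ chainSplits X r ι :=
    fun y hy => mem_union_left _ (mem_union_right _ (mem_image_of_mem _ hy))
  have mem_suf : ∀ y ∈ X \ {r},
      splitOf X (prefixSet (X \ {r}) (OrderDual.toDual ∘ ι) y) ∈ chainSplits X r ι :=
    fun y hy => mem_union_right _ (mem_image_of_mem _ hy)
  have ha := hZ (mem_insert_self a {b})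
  have hb := hZ (mem_insert_of_mem (mem_singleton_self b))
  have hc := hZ' (mem_insert_self c {d})
  have hd := hZ' (mem_insert_of_mem (mem_singleton_self d))
  rcases lt_trichotomy (ι b) (ι d) with h | h | h
  · exact ⟨_, mem_pre b hb, phiNe_prefixSplit hr hZ hZc (top hab) hZ'
      (mem_insert_of_mem (mem_singleton_self d)) h⟩
  · obtain rfl := hι hb hd h
    rcases lt_trichotomy (ι a) (ι c) with h' | h' | h'
    · exact ⟨_, mem_suf c hc, (phiNe_prefixSplit hr hZ' hZ'c (bot hcd) hZ
        (mem_insert_self a {b}) h').symm⟩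
    · exact absurd (by rw [hι ha hc h']) hne
    · exact ⟨_, mem_suf a ha, phiNe_prefixSplit hr hZ hZc (bot hab) hZ'
        (mem_insert_self c {b}) h'⟩
  · exact ⟨_, mem_pre d hd, (phiNe_prefixSplit hr hZ' hZ'c (top hcd) hZ
      (mem_insert_of_mem (mem_singleton_self b)) h).symm⟩

lemma dimSS_chainSplits (hX : 4 ≤ X.card) (hr : r ∈ X) (hι : Set.InjOn ι (X \ {r} : Finset α)) :
    dimSS (chainSplits X r ι) = 2 :=
  le_antisymm dimSS_chainSplits_le <| two_le_dimSS_of_isRootedInjective hX hr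
    (isSplitSystem_chainSplits (by omega) hr).1 (isRootedInjective_chainSplits hr hι)

end Construction

lemma exists_isRootedInjective_dimSS_eq_two {X : Finset α} {r : α} (hX : 4 ≤ X.card) (hr : r ∈ X) :
    ∃ 𝒮 : Finset (Finset (Finset α)),
      IsSplitSystem X 𝒮 ∧ IsRootedInjective X r 𝒮 ∧ dimSS 𝒮 = 2 := by
  have hι : Set.InjOn (fun x => X.toList.idxOf x) (X \ {r} : Finset α) := fun x hx y _ h =>
    (List.idxOf_inj (mem_toList.2 (mem_sdiff.1 hx).1)).1 h
  exact ⟨_, isSplitSystem_chainSplits (by omega) hr, isRootedInjective_chainSplits hr hι,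
    dimSS_chainSplits hX hr hι⟩

lemma IDr_eq_two {n : ℕ} (hn : 4 ≤ n) : IDr n = 2 := by
  have h1 : 1 ∈ Finset.Icc 1 n := mem_Icc.2 ⟨le_rfl, by omega⟩
  have hcard : 4 ≤ (Finset.Icc 1 n).card := by rw [Nat.card_Icc]; omega
  obtain ⟨𝒮, h𝒮⟩ := exists_isRootedInjective_dimSS_eq_two hcard h1
  refine le_antisymm (Nat.sInf_le ⟨𝒮, h𝒮⟩) (le_csInf ⟨2, 𝒮, h𝒮⟩ ?_)
  rintro d ⟨𝒮', hsys, hinj, rfl⟩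
  exact two_le_dimSS_of_isRootedInjective hcard h1 hsys.1 hinj

/-- For `X` with `n = |X| ≥ 4` and `r ∈ X`, there exists a split
system on `X` that is rooted-injective relative to `r` of dimension 2; moreover
`ID^r(n) = 2`. -/
theorem statement19 (X : Finset α) (n : ℕ) (hcard : X.card = n) (hn : 4 ≤ n)
    (r : α) (hr : r ∈ X) :
    (∃ 𝒮 : Finset (Finset (Finset α)),
      IsSplitSystem X 𝒮 ∧ IsRootedInjective X r 𝒮 ∧ dimSS 𝒮 = 2) ∧
    IDr n = 2 :=
  ⟨exists_isRootedInjective_dimSS_eq_two (hcard ▸ hn) hr, IDr_eq_two hn⟩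

end InjectiveSplitSystems
end
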